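/- Choose for each object V of 𝒞 a point x_V ∈ S₀ (with x_I = ∗) and set J(V) = f_V, where f_V : {x_V} → Obj(𝒞) sends x_V to V; for a morphism α : V → W set J(α) = F_α with F_α(x_V, x_W) = α. Then J : 𝒞 → 𝒞^{S₀}, together with φ₀ = id and the isomorphisms φ₂(U,V) : J(U) ⊗ J(V) → J(U ⊗ V) given by φ₂(U,V)(γ(x_U,x_V), x_{U⊗V}) = id_{U⊗V}, is a fully faithful tensor functor (compatible with the associativity constraint and the left and right units); consequently 𝒞^{S₀} has a full subcategory tensor equivalent to 𝒞. -/

import Mathlib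

open CategoryTheory

open scoped Classical
set_option linter.unusedSectionVars false
namespace CS

universe u v

variable {S₀ : Type} {C : Type u} [Category.{v} C]

structure CObj (S₀ : Type) (C : Type u) [Category.{v} C] where
  dom : Set S₀
  val : dom → C

variable [Preadditive C]

abbrev Mor (f g : CObj S₀ C) : Type v :=
  ∀ (x : f.dom) (y : g.dom), f.val x ⟶ g.val y

/-- condition (ii) of the definition of morphisms in `𝒞^{S₀}` -/
def FinCond {f g : CObj S₀ C} (F : Mor f g) : Prop :=
  g.dom.Infinite → ∀ x : f.dom, {y : g.dom | F x y ≠ 0}.Finite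

noncomputable def mcomp {f g h : CObj S₀ C} (G : Mor g h) (F : Mor f g) : Mor f h :=
  fun x y => ∑ᶠ z : g.dom, F x z ≫ G z y

noncomputable def mid (f : CObj S₀ C) : Mor f f :=
  fun x y =>
    if h : (x : S₀) = (y : S₀) then eqToHom (congrArg f.val (Subtype.ext h)) else 0

end CS
namespace CS

open MonoidalCategory

variable {S₀ : Type} {C : Type u} [Category.{v} C] [Preadditive C] [MonoidalCategory C]

lemma tobj_mem (γ : S₀ × S₀ ≃ S₀) (f g : CObj S₀ C)
    (z : ↑(γ '' (f.dom ×ˢ g.dom))) :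
    (γ.symm ↑z).1 ∈ f.dom ∧ (γ.symm ↑z).2 ∈ g.dom := by
  obtain ⟨p, hp, hpz⟩ := z.2
  rw [← hpz, Equiv.symm_apply_apply]
  exact ⟨hp.1, hp.2⟩

/-- The tensor product of objects of `𝒞^{S₀}`:
`(f ⊗ g)(γ(x,y)) = f(x) ⊗ g(y)` on the domain `γ(S_f × S_g)`. -/
def tobj (γ : S₀ × S₀ ≃ S₀) (f g : CObj S₀ C) : CObj S₀ C where
  dom := γ '' (f.dom ×ˢ g.dom)
  val := fun z =>
    f.val ⟨(γ.symm ↑z).1, (tobj_mem γ f g z).1⟩ ⊗ g.val ⟨(γ.symm ↑z).2, (tobj_mem γ f g z).2⟩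

lemma tobj_val (γ : S₀ × S₀ ≃ S₀) (f g : CObj S₀ C) (z : (tobj γ f g).dom) :
    (tobj γ f g).val z =
      f.val ⟨(γ.symm ↑z).1, (tobj_mem γ f g z).1⟩ ⊗
        g.val ⟨(γ.symm ↑z).2, (tobj_mem γ f g z).2⟩ := rfl

/-- The tensor product of morphisms of `𝒞^{S₀}`:
`(F ⊗ G)(γ(x,y), γ(x',y')) = F(x,x') ⊗ G(y,y')`. -/
def tmor (γ : S₀ × S₀ ≃ S₀) {f f' g g' : CObj S₀ C} (F : Mor f f') (G : Mor g g') :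
    Mor (tobj γ f g) (tobj γ f' g') :=
  fun z z' =>
    F ⟨(γ.symm ↑z).1, (tobj_mem γ f g z).1⟩ ⟨(γ.symm ↑z').1, (tobj_mem γ f' g' z').1⟩ ⊗ₘ
      G ⟨(γ.symm ↑z).2, (tobj_mem γ f g z).2⟩ ⟨(γ.symm ↑z').2, (tobj_mem γ f' g' z').2⟩

/-- The unit object `I : {∗} → Obj(𝒞)`, `∗ ↦ I`. -/
def iobj (pt : S₀) : CObj S₀ C := ⟨{pt}, fun _ => 𝟙_ C⟩

/-- The associativity constraint `A_{f,g,h}` given by Kronecker-delta identities. -/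
noncomputable def massoc (hα : ∀ X Y Z : C, (X ⊗ Y) ⊗ Z = X ⊗ (Y ⊗ Z))
    (γ : S₀ × S₀ ≃ S₀) (f g h : CObj S₀ C) :
    Mor (tobj γ (tobj γ f g) h) (tobj γ f (tobj γ g h)) :=
  fun v w =>
    if hc : (γ.symm (γ.symm ↑v).1).1 = (γ.symm ↑w).1
        ∧ (γ.symm (γ.symm ↑v).1).2 = (γ.symm (γ.symm ↑w).2).1
        ∧ (γ.symm ↑v).2 = (γ.symm (γ.symm ↑w).2).2 then
      eqToHom (by
        obtain ⟨h1, h2, h3⟩ := hc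
        simp only [tobj_val]
        rw [hα]
        congr 1
        · exact congrArg f.val (Subtype.ext h1)
        congr 1
        · exact congrArg g.val (Subtype.ext h2)
        · exact congrArg h.val (Subtype.ext h3))
    else 0

/-- The inverse associativity constraint `A⁻¹_{f,g,h}`. -/
noncomputable def massocInv (hα : ∀ X Y Z : C, (X ⊗ Y) ⊗ Z = X ⊗ (Y ⊗ Z))
    (γ : S₀ × S₀ ≃ S₀) (f g h : CObj S₀ C) :
    Mor (tobj γ f (tobj γ g h)) (tobj γ (tobj γ f g) h) :=
  fun w v =>
    if hc : (γ.symm ↑w).1 = (γ.symm (γ.symm ↑v).1).1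
        ∧ (γ.symm (γ.symm ↑w).2).1 = (γ.symm (γ.symm ↑v).1).2
        ∧ (γ.symm (γ.symm ↑w).2).2 = (γ.symm ↑v).2 then
      eqToHom (by
        obtain ⟨h1, h2, h3⟩ := hc
        simp only [tobj_val]
        rw [hα]
        congr 1
        · exact congrArg f.val (Subtype.ext h1)
        congr 1
        · exact congrArg g.val (Subtype.ext h2)
        · exact congrArg h.val (Subtype.ext h3))
    else 0

/-- The right unit `R_f : f ⊗ I → f`. -/
noncomputable def runit (hρ : ∀ X : C, X ⊗ 𝟙_ C = X) (γ : S₀ × S₀ ≃ S₀) (pt : S₀)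
    (f : CObj S₀ C) : Mor (tobj γ f (iobj pt)) f :=
  fun z x' =>
    if hc : (γ.symm ↑z).1 = (x' : S₀) then
      eqToHom (by
        simp only [tobj_val]
        show f.val _ ⊗ 𝟙_ C = f.val x'
        rw [hρ]
        exact congrArg f.val (Subtype.ext hc))
    else 0

/-- The inverse `R⁻¹_f : f → f ⊗ I`. -/
noncomputable def runitInv (hρ : ∀ X : C, X ⊗ 𝟙_ C = X) (γ : S₀ × S₀ ≃ S₀) (pt : S₀)
    (f : CObj S₀ C) : Mor f (tobj γ f (iobj pt)) :=
  fun x' z =>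
    if hc : (x' : S₀) = (γ.symm ↑z).1 then
      eqToHom (by
        simp only [tobj_val]
        show f.val x' = f.val _ ⊗ 𝟙_ C
        rw [hρ]
        exact congrArg f.val (Subtype.ext hc))
    else 0

/-- The left unit `L_f : I ⊗ f → f`. -/
noncomputable def lunit (hl : ∀ X : C, 𝟙_ C ⊗ X = X) (γ : S₀ × S₀ ≃ S₀) (pt : S₀)
    (f : CObj S₀ C) : Mor (tobj γ (iobj pt) f) f :=
  fun z x' =>
    if hc : (γ.symm ↑z).2 = (x' : S₀) then
      eqToHom (by
        simp only [tobj_val]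
        show 𝟙_ C ⊗ f.val _ = f.val x'
        rw [hl]
        exact congrArg f.val (Subtype.ext hc))
    else 0

/-- The inverse `L⁻¹_f : f → I ⊗ f`. -/
noncomputable def lunitInv (hl : ∀ X : C, 𝟙_ C ⊗ X = X) (γ : S₀ × S₀ ≃ S₀) (pt : S₀)
    (f : CObj S₀ C) : Mor f (tobj γ (iobj pt) f) :=
  fun x' z =>
    if hc : (x' : S₀) = (γ.symm ↑z).2 then
      eqToHom (by
        simp only [tobj_val]
        show f.val x' = 𝟙_ C ⊗ f.val _
        rw [hl]
        exact congrArg f.val (Subtype.ext hc))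
    else 0

end CS
namespace CS

open MonoidalCategory

variable {S₀ : Type} {C : Type u} [Category.{v} C] [Preadditive C] [MonoidalCategory C]

/-- The inclusion functor `J : 𝒞 → 𝒞^{S₀}` on objects: `J(V) : {x_V} → Obj(𝒞)`, `x_V ↦ V`. -/
def jobj (xc : C → S₀) (V : C) : CObj S₀ C := ⟨{xc V}, fun _ => V⟩

/-- The inclusion functor on morphisms: `J(α)(x_V, x_W) = α`. -/
def jmor (xc : C → S₀) {V W : C} (α : V ⟶ W) : Mor (jobj xc V) (jobj xc W) :=
  fun _ _ => α

/-- The structural isomorphism `φ₂(U,V) : J(U) ⊗ J(V) → J(U ⊗ V)`. -/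
def jphi2 (xc : C → S₀) (γ : S₀ × S₀ ≃ S₀) (U V : C) :
    Mor (tobj γ (jobj xc U) (jobj xc V)) (jobj xc (U ⊗ V)) :=
  fun _ _ => 𝟙 (U ⊗ V)

/-- The structural isomorphism `φ₀ : I → J(I)`. -/
def jphi0 (xc : C → S₀) (pt : S₀) : Mor (iobj pt) (jobj xc (𝟙_ C)) :=
  fun _ _ => 𝟙 (𝟙_ C)

end CS

/-! Every object `J(V)` has a one-point domain, and so do tensor products of such objects and
the unit object. Between objects with one-point domains a morphism of `𝒞^{S₀}` is a single
morphism of `𝒞`, the sum defining composition has a single term, and the constraints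
`A`, `R`, `L` are `eqToHom`s of the strict constraints of `𝒞`; every claimed identity thus
reduces to one in `𝒞`. -/

namespace CS

section Preadditive

variable {S₀ : Type} {C : Type u} [Category.{v} C] [Preadditive C]

lemma mcomp_apply_of_unique {f g h : CObj S₀ C} [Unique g.dom] (G : Mor g h) (F : Mor f g)
    (x : f.dom) (y : h.dom) : mcomp G F x y = F x default ≫ G default y :=
  finsum_unique (fun z : g.dom => F x z ≫ G z y)

lemma mor_ext_of_unique {f g : CObj S₀ C} [Unique f.dom] [Unique g.dom] {F G : Mor f g}
    (h : F default default = G default default) : F = G := by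
  funext x y
  rw [Unique.eq_default x, Unique.eq_default y]
  exact h

lemma mid_apply_self (f : CObj S₀ C) (x : f.dom) : mid f x x = 𝟙 (f.val x) :=
  (dif_pos rfl).trans (eqToHom_refl _ _)

lemma exists_inverse_of_unique {f g : CObj S₀ C} [Unique f.dom] [Unique g.dom] (F : Mor f g)
    (hF : IsIso (F default default)) : ∃ ψ : Mor g f, mcomp ψ F = mid f ∧ mcomp F ψ = mid g := by
  refine ⟨fun y x => eqToHom (congrArg g.val (Unique.eq_default y)) ≫ inv (F default default) ≫
    eqToHom (congrArg f.val (Unique.eq_default x)).symm, ?_, ?_⟩ <;>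
  · refine mor_ext_of_unique ?_
    simp [mcomp_apply_of_unique, mid_apply_self]

lemma finCond_of_finite {f g : CObj S₀ C} [Finite g.dom] (F : Mor f g) : FinCond F :=
  fun _ _ => Set.toFinite _

end Preadditive

open MonoidalCategory

variable {S₀ : Type} {C : Type u} [Category.{v} C] [Preadditive C] [MonoidalCategory C]

instance uniqueJobjDom (xc : C → S₀) (V : C) : Unique (jobj xc V).dom where
  default := ⟨xc V, rfl⟩
  uniq z := Subtype.ext z.2

instance uniqueIobjDom (pt : S₀) : Unique (iobj (C := C) pt).dom where
  default := ⟨pt, rfl⟩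
  uniq z := Subtype.ext z.2

instance uniqueTobjDom (γ : S₀ × S₀ ≃ S₀) (f g : CObj S₀ C) [Unique f.dom] [Unique g.dom] :
    Unique (tobj γ f g).dom where
  default := ⟨γ ((default : f.dom), (default : g.dom)), _,
    ⟨(default : f.dom).2, (default : g.dom).2⟩, rfl⟩
  uniq := by
    rintro ⟨_, ⟨a, b⟩, ⟨ha, hb⟩, rfl⟩
    obtain rfl : a = (default : f.dom) := congrArg Subtype.val (Unique.eq_default ⟨a, ha⟩)
    obtain rfl : b = (default : g.dom) := congrArg Subtype.val (Unique.eq_default ⟨b, hb⟩)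
    rfl

lemma eq_of_mem_jobj_dom {xc : C → S₀} {V : C} {z : S₀} (h : z ∈ (jobj xc V).dom) :
    z = xc V := h

lemma mid_jobj_apply (xc : C → S₀) (V : C) (x y : (jobj xc V).dom) :
    mid (jobj xc V) x y = 𝟙 V := by
  rw [Subsingleton.elim x y]
  exact mid_apply_self _ y

lemma massoc_jobj_apply (hα : ∀ X Y Z : C, (X ⊗ Y) ⊗ Z = X ⊗ (Y ⊗ Z))
    (γ : S₀ × S₀ ≃ S₀) (xc : C → S₀) (U V W : C)
    (x : (tobj γ (tobj γ (jobj xc U) (jobj xc V)) (jobj xc W)).dom)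
    (y : (tobj γ (jobj xc U) (tobj γ (jobj xc V) (jobj xc W))).dom) :
    massoc hα γ (jobj xc U) (jobj xc V) (jobj xc W) x y = eqToHom (hα U V W) := by
  obtain ⟨hxUV, hxW⟩ := tobj_mem γ _ _ x
  obtain ⟨hxU, hxV⟩ := tobj_mem γ _ _ ⟨_, hxUV⟩
  obtain ⟨hyU, hyVW⟩ := tobj_mem γ _ _ y
  obtain ⟨hyV, hyW⟩ := tobj_mem γ _ _ ⟨_, hyVW⟩
  exact dif_pos ⟨(eq_of_mem_jobj_dom hxU).trans (eq_of_mem_jobj_dom hyU).symm,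
    (eq_of_mem_jobj_dom hxV).trans (eq_of_mem_jobj_dom hyV).symm,
    (eq_of_mem_jobj_dom hxW).trans (eq_of_mem_jobj_dom hyW).symm⟩

lemma runit_jobj_apply (hρ : ∀ X : C, X ⊗ 𝟙_ C = X) (γ : S₀ × S₀ ≃ S₀) (pt : S₀)
    (xc : C → S₀) (V : C) (x : (tobj γ (jobj xc V) (iobj pt)).dom) (y : (jobj xc V).dom) :
    runit hρ γ pt (jobj xc V) x y = eqToHom (hρ V) :=
  dif_pos ((eq_of_mem_jobj_dom (tobj_mem γ _ _ x).1).trans y.2.symm)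

lemma lunit_jobj_apply (hl : ∀ X : C, 𝟙_ C ⊗ X = X) (γ : S₀ × S₀ ≃ S₀) (pt : S₀)
    (xc : C → S₀) (V : C) (x : (tobj γ (iobj pt) (jobj xc V)).dom) (y : (jobj xc V).dom) :
    lunit hl γ pt (jobj xc V) x y = eqToHom (hl V) :=
  dif_pos ((eq_of_mem_jobj_dom (tobj_mem γ _ _ x).2).trans y.2.symm)

section Functor

variable (γ : S₀ × S₀ ≃ S₀) (pt : S₀) (xc : C → S₀)

lemma jmor_id (V : C) : jmor xc (𝟙 V) = mid (jobj xc V) :=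
  mor_ext_of_unique (mid_apply_self (jobj xc V) default).symm

lemma jmor_comp {U V W : C} (α : U ⟶ V) (β : V ⟶ W) :
    jmor xc (α ≫ β) = mcomp (jmor xc β) (jmor xc α) :=
  mor_ext_of_unique (mcomp_apply_of_unique (jmor xc β) (jmor xc α) default default).symm

lemma existsUnique_jmor_eq {V W : C} (F : Mor (jobj xc V) (jobj xc W)) :
    ∃! α : V ⟶ W, jmor xc α = F :=
  ⟨F default default, mor_ext_of_unique rfl, fun _ h => h ▸ rfl⟩

lemma exists_inverse_jphi0 : ∃ ψ : Mor (jobj xc (𝟙_ C)) (iobj pt),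
    mcomp ψ (jphi0 xc pt) = mid (iobj pt) ∧ mcomp (jphi0 xc pt) ψ = mid (jobj xc (𝟙_ C)) :=
  exists_inverse_of_unique _ (IsIso.id _)

lemma exists_inverse_jphi2 (U V : C) :
    ∃ ψ : Mor (jobj xc (U ⊗ V)) (tobj γ (jobj xc U) (jobj xc V)),
      mcomp ψ (jphi2 xc γ U V) = mid (tobj γ (jobj xc U) (jobj xc V)) ∧
      mcomp (jphi2 xc γ U V) ψ = mid (jobj xc (U ⊗ V)) :=
  exists_inverse_of_unique _ (IsIso.id _)

lemma jphi2_naturality {U U' V V' : C} (α : U ⟶ U') (β : V ⟶ V') :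
    mcomp (jmor xc (α ⊗ₘ β)) (jphi2 xc γ U V) =
      mcomp (jphi2 xc γ U' V') (tmor γ (jmor xc α) (jmor xc β)) := by
  refine mor_ext_of_unique ?_
  simp only [mcomp_apply_of_unique, tmor, jmor, jphi2]
  -- the hom-types still mention `(jobj xc V).val _`; unfold them so that `simp` sees `V`
  dsimp only [jobj, iobj, tobj]
  simp

lemma jphi2_massoc (hα : ∀ X Y Z : C, (X ⊗ Y) ⊗ Z = X ⊗ (Y ⊗ Z)) (U V W : C) :
    mcomp (jmor xc (eqToHom (hα U V W)))
        (mcomp (jphi2 xc γ (U ⊗ V) W) (tmor γ (jphi2 xc γ U V) (mid (jobj xc W)))) =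
      mcomp (jphi2 xc γ U (V ⊗ W))
        (mcomp (tmor γ (mid (jobj xc U)) (jphi2 xc γ V W))
          (massoc hα γ (jobj xc U) (jobj xc V) (jobj xc W))) := by
  refine mor_ext_of_unique ?_
  simp only [mcomp_apply_of_unique, tmor, jmor, jphi2, mid_jobj_apply, massoc_jobj_apply]
  dsimp only [jobj, iobj, tobj]
  simp

lemma jphi2_runit (hρ : ∀ X : C, X ⊗ 𝟙_ C = X) (V : C) :
    mcomp (jmor xc (eqToHom (hρ V)))
        (mcomp (jphi2 xc γ V (𝟙_ C)) (tmor γ (mid (jobj xc V)) (jphi0 xc pt))) =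
      runit hρ γ pt (jobj xc V) := by
  refine mor_ext_of_unique ?_
  simp only [mcomp_apply_of_unique, tmor, jmor, jphi2, jphi0, mid_jobj_apply, runit_jobj_apply]
  dsimp only [jobj, iobj, tobj]
  simp

lemma jphi2_lunit (hl : ∀ X : C, 𝟙_ C ⊗ X = X) (V : C) :
    mcomp (jmor xc (eqToHom (hl V)))
        (mcomp (jphi2 xc γ (𝟙_ C) V) (tmor γ (jphi0 xc pt) (mid (jobj xc V)))) =
      lunit hl γ pt (jobj xc V) := by
  refine mor_ext_of_unique ?_
  simp only [mcomp_apply_of_unique, tmor, jmor, jphi2, jphi0, mid_jobj_apply, lunit_jobj_apply]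
  dsimp only [jobj, iobj, tobj]
  simp

end Functor

theorem stmt8_general {S₀ : Type} {C : Type u} [Category.{v} C] [Preadditive C]
    [MonoidalCategory C] (γ : S₀ × S₀ ≃ S₀) (pt : S₀)
    (hα : ∀ X Y Z : C, (X ⊗ Y) ⊗ Z = X ⊗ (Y ⊗ Z))
    (hρ : ∀ X : C, X ⊗ 𝟙_ C = X) (hl : ∀ X : C, 𝟙_ C ⊗ X = X)
    (xc : C → S₀) :
    -- `J` is a functor
    (∀ V : C, jmor xc (𝟙 V) = mid (jobj xc V))
    ∧ (∀ (U V W : C) (α : U ⟶ V) (β : V ⟶ W),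
        jmor xc (α ≫ β) = mcomp (jmor xc β) (jmor xc α))
    -- morphisms in the image satisfy the finiteness condition
    ∧ (∀ (V W : C) (α : V ⟶ W), FinCond (jmor xc α))
    -- `J` is fully faithful
    ∧ (∀ (V W : C) (F : Mor (jobj xc V) (jobj xc W)), ∃! α : V ⟶ W, jmor xc α = F)
    -- `φ₀` is an isomorphism
    ∧ (∃ ψ : Mor (jobj xc (𝟙_ C)) (iobj pt),
        mcomp ψ (jphi0 xc pt) = mid (iobj pt) ∧
        mcomp (jphi0 xc pt) ψ = mid (jobj xc (𝟙_ C)))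
    -- `φ₂(U,V)` is a natural isomorphism
    ∧ (∀ U V : C, ∃ ψ : Mor (jobj xc (U ⊗ V)) (tobj γ (jobj xc U) (jobj xc V)),
        mcomp ψ (jphi2 xc γ U V) = mid (tobj γ (jobj xc U) (jobj xc V)) ∧
        mcomp (jphi2 xc γ U V) ψ = mid (jobj xc (U ⊗ V)))
    ∧ (∀ (U U' V V' : C) (α : U ⟶ U') (β : V ⟶ V'),
        mcomp (jmor xc (α ⊗ₘ β)) (jphi2 xc γ U V) =
          mcomp (jphi2 xc γ U' V') (tmor γ (jmor xc α) (jmor xc β)))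
    -- compatibility with the associativity constraints
    ∧ (∀ U V W : C,
        mcomp (jmor xc (eqToHom (hα U V W)))
          (mcomp (jphi2 xc γ (U ⊗ V) W) (tmor γ (jphi2 xc γ U V) (mid (jobj xc W)))) =
        mcomp (jphi2 xc γ U (V ⊗ W))
          (mcomp (tmor γ (mid (jobj xc U)) (jphi2 xc γ V W))
            (massoc hα γ (jobj xc U) (jobj xc V) (jobj xc W))))
    -- compatibility with the right units
    ∧ (∀ V : C,
        mcomp (jmor xc (eqToHom (hρ V)))
          (mcomp (jphi2 xc γ V (𝟙_ C)) (tmor γ (mid (jobj xc V)) (jphi0 xc pt))) =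
        runit hρ γ pt (jobj xc V))
    -- compatibility with the left units
    ∧ (∀ V : C,
        mcomp (jmor xc (eqToHom (hl V)))
          (mcomp (jphi2 xc γ (𝟙_ C) V) (tmor γ (jphi0 xc pt) (mid (jobj xc V)))) =
        lunit hl γ pt (jobj xc V)) := by
  exact ⟨jmor_id xc, fun _ _ _ => jmor_comp xc, fun _ _ _ => finCond_of_finite _,
    fun _ _ => existsUnique_jmor_eq xc, exists_inverse_jphi0 pt xc, exists_inverse_jphi2 γ xc,
    fun _ _ _ _ => jphi2_naturality γ xc, jphi2_massoc γ xc hα, jphi2_runit γ pt xc hρ,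
    jphi2_lunit γ pt xc hl⟩

/-- `(J, φ₀, φ₂)` is a fully faithful tensor functor `𝒞 → 𝒞^{S₀}`,
so that `𝒞^{S₀}` has a full subcategory tensor equivalent to `𝒞`. -/
theorem stmt8 {S₀ : Type} {C : Type u} [Category.{v} C] [Preadditive C]
    [MonoidalCategory C] [MonoidalPreadditive C] (hS₀ : Infinite S₀)
    (γ : S₀ × S₀ ≃ S₀) (pt : S₀)
    (hα : ∀ X Y Z : C, (X ⊗ Y) ⊗ Z = X ⊗ (Y ⊗ Z))
    (hρ : ∀ X : C, X ⊗ 𝟙_ C = X) (hl : ∀ X : C, 𝟙_ C ⊗ X = X)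
    (xc : C → S₀) (hI : xc (𝟙_ C) = pt) :
    -- `J` is a functor
    (∀ V : C, jmor xc (𝟙 V) = mid (jobj xc V))
    ∧ (∀ (U V W : C) (α : U ⟶ V) (β : V ⟶ W),
        jmor xc (α ≫ β) = mcomp (jmor xc β) (jmor xc α))
    -- morphisms in the image satisfy the finiteness condition
    ∧ (∀ (V W : C) (α : V ⟶ W), FinCond (jmor xc α))
    -- `J` is fully faithful
    ∧ (∀ (V W : C) (F : Mor (jobj xc V) (jobj xc W)), ∃! α : V ⟶ W, jmor xc α = F)
    -- `φ₀` is an isomorphism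
    ∧ (∃ ψ : Mor (jobj xc (𝟙_ C)) (iobj pt),
        mcomp ψ (jphi0 xc pt) = mid (iobj pt) ∧
        mcomp (jphi0 xc pt) ψ = mid (jobj xc (𝟙_ C)))
    -- `φ₂(U,V)` is a natural isomorphism
    ∧ (∀ U V : C, ∃ ψ : Mor (jobj xc (U ⊗ V)) (tobj γ (jobj xc U) (jobj xc V)),
        mcomp ψ (jphi2 xc γ U V) = mid (tobj γ (jobj xc U) (jobj xc V)) ∧
        mcomp (jphi2 xc γ U V) ψ = mid (jobj xc (U ⊗ V)))
    ∧ (∀ (U U' V V' : C) (α : U ⟶ U') (β : V ⟶ V'),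
        mcomp (jmor xc (α ⊗ₘ β)) (jphi2 xc γ U V) =
          mcomp (jphi2 xc γ U' V') (tmor γ (jmor xc α) (jmor xc β)))
    -- compatibility with the associativity constraints
    ∧ (∀ U V W : C,
        mcomp (jmor xc (eqToHom (hα U V W)))
          (mcomp (jphi2 xc γ (U ⊗ V) W) (tmor γ (jphi2 xc γ U V) (mid (jobj xc W)))) =
        mcomp (jphi2 xc γ U (V ⊗ W))
          (mcomp (tmor γ (mid (jobj xc U)) (jphi2 xc γ V W))
            (massoc hα γ (jobj xc U) (jobj xc V) (jobj xc W))))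
    -- compatibility with the right units
    ∧ (∀ V : C,
        mcomp (jmor xc (eqToHom (hρ V)))
          (mcomp (jphi2 xc γ V (𝟙_ C)) (tmor γ (mid (jobj xc V)) (jphi0 xc pt))) =
        runit hρ γ pt (jobj xc V))
    -- compatibility with the left units
    ∧ (∀ V : C,
        mcomp (jmor xc (eqToHom (hl V)))
          (mcomp (jphi2 xc γ (𝟙_ C) V) (tmor γ (jphi0 xc pt) (mid (jobj xc V)))) =
        lunit hl γ pt (jobj xc V)) :=
  stmt8_general γ pt hα hρ hl xc

end CS
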